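/- Let g : ℝ^N → ℝ have L-Lipschitz gradient. If at a point ν and step size s > 0 the polling is unsuccessful in all coordinate directions, i.e., g(ν ± s e_i) ≥ g(ν) for every i = 1,…,N and both signs, then every partial derivative satisfies |∂_i g(ν)| ≤ (L/2) s, and consequently ‖∇g(ν)‖₂ ≤ (L/2)√N · s. -/

import Mathlib

open intervalIntegral RealInnerProductSpace

theorem descent_aux {E : Type*} [NormedAddCommGroup E] [InnerProductSpace ℝ E]
    [CompleteSpace E]
    (g : E → ℝ) (L : ℝ) (hL : 0 ≤ L) (hdiff : Differentiable ℝ g)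
    (hlip : ∀ x y : E, ‖gradient g x - gradient g y‖ ≤ L * ‖x - y‖)
    (x d : E) :
    g (x + d) - g x - ⟪gradient g x, d⟫ ≤ L / 2 * ‖d‖ ^ 2 := by
  have hgradcont : Continuous (gradient g) := by
    apply (LipschitzWith.of_dist_le_mul (K := ⟨L, hL⟩) ?_).continuous
    intro a b
    rw [dist_eq_norm, dist_eq_norm]; exact hlip a b
  have hderiv : ∀ t : ℝ, HasDerivAt (fun t : ℝ => g (x + t • d))
      ⟪gradient g (x + t • d), d⟫ t := by
    intro t
    have hline : HasDerivAt (fun t : ℝ => x + t • d) d t := by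
      simpa using ((hasDerivAt_id t).smul_const d).const_add x
    have hg := ((hdiff (x + t • d)).hasGradientAt).hasFDerivAt
    have := hg.comp_hasDerivAt t hline
    simpa [InnerProductSpace.toDual_apply_apply, Function.comp_def] using this
  have hcont : Continuous fun t : ℝ => ⟪gradient g (x + t • d), d⟫ := by
    exact (hgradcont.comp (by continuity)).inner continuous_const
  have hint : ∫ t in (0:ℝ)..1, ⟪gradient g (x + t • d), d⟫ = g (x + d) - g x := by
    have := intervalIntegral.integral_eq_sub_of_hasDerivAt (a := 0) (b := 1)
      (fun t _ => hderiv t) (hcont.intervalIntegrable 0 1)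
    simpa using this
  have hconst : ∫ _t in (0:ℝ)..1, ⟪gradient g x, d⟫ = ⟪gradient g x, d⟫ := by simp
  have key : g (x + d) - g x - ⟪gradient g x, d⟫
      = ∫ t in (0:ℝ)..1, ⟪gradient g (x + t • d) - gradient g x, d⟫ := by
    have h1 : ∀ t : ℝ, (⟪gradient g (x + t • d) - gradient g x, d⟫ : ℝ)
        = ⟪gradient g (x + t • d), d⟫ - ⟪gradient g x, d⟫ :=
      fun t => inner_sub_left _ _ _
    rw [intervalIntegral.integral_congr (g := fun t : ℝ =>
        ⟪gradient g (x + t • d), d⟫ - ⟪gradient g x, d⟫) (fun t _ => h1 t),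
      intervalIntegral.integral_sub (hcont.intervalIntegrable 0 1)
        intervalIntegrable_const, hint]
    simp
  rw [key]
  have hmono : ∫ t in (0:ℝ)..1, ⟪gradient g (x + t • d) - gradient g x, d⟫
      ≤ ∫ t in (0:ℝ)..1, L * t * ‖d‖ ^ 2 := by
    refine intervalIntegral.integral_mono_on
      (f := fun t : ℝ => (⟪gradient g (x + t • d) - gradient g x, d⟫ : ℝ))
      (g := fun t : ℝ => L * t * ‖d‖ ^ 2) (by norm_num)
      ((((hgradcont.comp (by continuity)).sub continuous_const).inner
        continuous_const).intervalIntegrable 0 1)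
      (by apply Continuous.intervalIntegrable; continuity) ?_
    intro t ht
    calc (⟪gradient g (x + t • d) - gradient g x, d⟫ : ℝ)
        ≤ ‖gradient g (x + t • d) - gradient g x‖ * ‖d‖ := real_inner_le_norm _ _
      _ ≤ (L * ‖(x + t • d) - x‖) * ‖d‖ := by
          gcongr; exact hlip _ _
      _ = L * t * ‖d‖ ^ 2 := by
          rw [add_sub_cancel_left, norm_smul, Real.norm_eq_abs,
            abs_of_nonneg ht.1]
          ring
  refine hmono.trans_eq ?_
  have h2 : (fun t : ℝ => L * t * ‖d‖ ^ 2) = fun t : ℝ => t * (L * ‖d‖ ^ 2) := by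
    funext t; ring
  rw [h2, intervalIntegral.integral_mul_const, integral_id]
  norm_num
  ring

/-- Unsuccessful coordinate polling bounds the gradient: if `g` has `L`-Lipschitz
gradient and `g(ν ± s e_i) ≥ g(ν)` for every coordinate `i` and both signs, then
`|∂_i g(ν)| ≤ (L/2) s` for every `i`, and `‖∇g(ν)‖₂ ≤ (L/2) √N · s`. -/
theorem unsuccessful_poll_gradient_bound (N : ℕ)
    (g : EuclideanSpace ℝ (Fin N) → ℝ) (L : ℝ) (hL : 0 ≤ L)
    (hdiff : Differentiable ℝ g)
    (hlip : ∀ x y : EuclideanSpace ℝ (Fin N),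
      ‖gradient g x - gradient g y‖ ≤ L * ‖x - y‖)
    (ν : EuclideanSpace ℝ (Fin N)) (s : ℝ) (hs : 0 < s)
    (hpoll : ∀ i : Fin N,
      g ν ≤ g (ν + s • EuclideanSpace.single i (1 : ℝ)) ∧
      g ν ≤ g (ν - s • EuclideanSpace.single i (1 : ℝ))) :
    (∀ i : Fin N, |gradient g ν i| ≤ (L / 2) * s) ∧
    ‖gradient g ν‖ ≤ (L / 2) * Real.sqrt N * s := by
  have hcoord : ∀ i : Fin N, |gradient g ν i| ≤ (L / 2) * s := by
    intro i
    set d : EuclideanSpace ℝ (Fin N) := s • EuclideanSpace.single i (1 : ℝ) with hd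
    have hnd : ‖d‖ = s := by
      rw [hd, norm_smul, EuclideanSpace.norm_single]
      simp [abs_of_pos hs]
    have hip : (⟪gradient g ν, d⟫ : ℝ) = s * gradient g ν i := by
      rw [hd, real_inner_smul_right, EuclideanSpace.inner_single_right]
      simp [mul_comm]
    have h1 := descent_aux g L hL hdiff hlip ν d
    have h2 := descent_aux g L hL hdiff hlip ν (-d)
    rw [← sub_eq_add_neg] at h2
    have hup := (hpoll i).1
    have hdown := (hpoll i).2
    rw [← hd] at hup hdown
    rw [inner_neg_right, norm_neg] at h2
    rw [hnd, hip] at h1 h2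
    -- h1 : g (ν + d) - g ν - s * ∂ ≤ L/2 * s^2, with g(ν+d) ≥ g ν
    have hA : -(L / 2 * s ^ 2) ≤ s * gradient g ν i := by nlinarith
    have hB : s * gradient g ν i ≤ L / 2 * s ^ 2 := by nlinarith
    rw [abs_le]
    constructor
    · nlinarith
    · nlinarith
  refine ⟨hcoord, ?_⟩
  have hnorm : ‖gradient g ν‖ = Real.sqrt (∑ i, ‖gradient g ν i‖ ^ 2) :=
    EuclideanSpace.norm_eq _
  rw [hnorm]
  have hsum : (∑ i, ‖gradient g ν i‖ ^ 2) ≤ N * ((L / 2) * s) ^ 2 := by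
    calc (∑ i, ‖gradient g ν i‖ ^ 2) ≤ ∑ _i : Fin N, ((L / 2) * s) ^ 2 := by
          apply Finset.sum_le_sum
          intro i _
          have := hcoord i
          rw [Real.norm_eq_abs]
          nlinarith [abs_nonneg (gradient g ν i)]
      _ = N * ((L / 2) * s) ^ 2 := by simp [mul_comm]
  calc Real.sqrt (∑ i, ‖gradient g ν i‖ ^ 2)
      ≤ Real.sqrt (N * ((L / 2) * s) ^ 2) := Real.sqrt_le_sqrt hsum
    _ = Real.sqrt N * ((L / 2) * s) := by
        rw [Real.sqrt_mul (Nat.cast_nonneg N), Real.sqrt_sq (by positivity)]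
    _ = L / 2 * Real.sqrt N * s := by ring
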